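/- arXiv:1407.1107 — 2 statements merged into one kernel-verified Lean document; each statement's English description precedes it below -/
import Mathlib

section
/- There exists a k-to-1 map u : DL_d(q) → i(DL_d^k(q)) that is at bounded distance from the identity, where i(DL_d^k(q)) is the set of vertices of DL_d(q) whose first-tree height lies in kℤ. Consequently, if φ : DL_d^k(q) → DL_d(q) is a bijective (K,C)-quasi-isometry, then Φ = u ∘ φ : DL_d^k(q) → DL_d^k(q) is a quasi-isometry with |Φ^{−1}(v)| = k for every vertex v. -/
/-- Graph distance associated to an edge relation `E`: the length of a shortest `E`-path. -/
noncomputable def gdist {D : Type*} (E : D → D → Prop) (x y : D) : ℕ :=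
  sInf {n | ∃ f : ℕ → D, f 0 = x ∧ f n = y ∧ ∀ m < n, E (f m) (f (m + 1))}

/-- Vertices of the Diestel-Leader graph: points of the product of the trees whose heights sum
to zero. -/
def DLvert {d : ℕ} (V : Fin d → Type*) (h : ∀ i, V i → ℤ) : Type _ :=
  {x : ∀ i, V i // ∑ i, h i (x i) = 0}

/-- Edges of the Diestel-Leader graph: two coordinates move along tree edges, all others fixed. -/
def DLedge {d : ℕ} {V : Fin d → Type*} (adj : ∀ i, V i → V i → Prop) (h : ∀ i, V i → ℤ)
    (x y : DLvert V h) : Prop :=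
  ∃ i j, i ≠ j ∧ adj i (x.1 i) (y.1 i) ∧ adj j (x.1 j) (y.1 j) ∧
    ∀ l, l ≠ i → l ≠ j → x.1 l = y.1 l

/-- The graph metric on `DL_d(q)`. -/
noncomputable def DLdist {d : ℕ} {V : Fin d → Type*} (adj : ∀ i, V i → V i → Prop)
    (h : ∀ i, V i → ℤ) (x y : DLvert V h) : ℕ :=
  gdist (DLedge adj h) x y

/-!
Since every vertex has exactly `q` children in every tree, the children of `a` in the first tree
can be matched with the children of `parent b` in the second.  This turns "one level down in the
first tree, one level up in the second" into a permutation `σ` of the vertices of `DL_d(q)` by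
edges, lowering the first height by one.  Then `u x := σ ^ (h₀ x % k) x` moves `x` by at most `k`
edges onto a vertex of first height in `kℤ`, and the fibre of `u` over such a `y` is
`{σ ^ (-r) y | 0 ≤ r < k}`.  Being at distance at most `k` from the identity, `u` changes distances
by at most `2k`, so `u ∘ φ` is again a quasi-isometry.
-/

open Function

section WalkDistance

variable {D : Type*} (E : D → D → Prop)

def HasWalkOfLength (n : ℕ) (x y : D) : Prop :=
  ∃ f : ℕ → D, f 0 = x ∧ f n = y ∧ ∀ m < n, E (f m) (f (m + 1))

variable {E}

lemma HasWalkOfLength.append {m n : ℕ} {x y z : D} (hxy : HasWalkOfLength E m x y)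
    (hyz : HasWalkOfLength E n y z) : HasWalkOfLength E (m + n) x z := by
  obtain ⟨f, rfl, rfl, hf⟩ := hxy
  obtain ⟨g, hg0, rfl, hg⟩ := hyz
  refine ⟨fun t => if t ≤ m then f t else g (t - m), by simp, ?_, fun t ht => ?_⟩
  · rcases n.eq_zero_or_pos with rfl | hn
    · simp [hg0]
    · simp [show ¬ m + n ≤ m by omega]
  · rcases lt_trichotomy t m with htm | rfl | htm
    · simpa [htm.le, Nat.succ_le_of_lt htm] using hf t htm
    · simpa [← hg0] using hg 0 (by omega)
    · simpa [htm.not_ge, show ¬ t + 1 ≤ m by omega, show t + 1 - m = t - m + 1 by omega]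
        using hg (t - m) (by omega)

lemma HasWalkOfLength.reverse (hE : ∀ ⦃a b⦄, E a b → E b a) {n : ℕ} {x y : D}
    (hxy : HasWalkOfLength E n x y) : HasWalkOfLength E n y x := by
  obtain ⟨f, rfl, rfl, hf⟩ := hxy
  refine ⟨fun t => f (n - t), by simp, by simp, fun t ht => ?_⟩
  have := hE (hf (n - (t + 1)) (by omega))
  rwa [show n - (t + 1) + 1 = n - t by omega] at this

lemma HasWalkOfLength.iterate {σ : D → D} (hσ : ∀ x, E x (σ x)) (n : ℕ) (x : D) :
    HasWalkOfLength E n x (σ^[n] x) :=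
  ⟨fun t => σ^[t] x, rfl, rfl, fun t _ => by simpa [iterate_succ_apply'] using hσ (σ^[t] x)⟩

lemma gdist_le {n : ℕ} {x y : D} (hxy : HasWalkOfLength E n x y) : gdist E x y ≤ n :=
  Nat.sInf_le hxy

lemma gdist_self (x : D) : gdist E x x = 0 :=
  Nat.le_zero.1 (gdist_le ⟨fun _ => x, rfl, rfl, fun _ h => (Nat.not_lt_zero _ h).elim⟩)

lemma hasWalkOfLength_gdist {x y : D} (hxy : ∃ n, HasWalkOfLength E n x y) :
    HasWalkOfLength E (gdist E x y) x y :=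
  Nat.sInf_mem hxy

lemma gdist_triangle (hconn : ∀ x y : D, ∃ n, HasWalkOfLength E n x y) (x y z : D) :
    gdist E x z ≤ gdist E x y + gdist E y z :=
  gdist_le ((hasWalkOfLength_gdist (hconn x y)).append (hasWalkOfLength_gdist (hconn y z)))

lemma gdist_comm (hconn : ∀ x y : D, ∃ n, HasWalkOfLength E n x y)
    (hE : ∀ ⦃a b⦄, E a b → E b a) (x y : D) : gdist E x y = gdist E y x :=
  le_antisymm (gdist_le ((hasWalkOfLength_gdist (hconn y x)).reverse hE))
    (gdist_le ((hasWalkOfLength_gdist (hconn x y)).reverse hE))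

lemma gdist_le_gdist_add_of_near (hconn : ∀ x y : D, ∃ n, HasWalkOfLength E n x y)
    (hE : ∀ ⦃a b⦄, E a b → E b a) {u : D → D} {B : ℕ} (hu : ∀ x, gdist E x (u x) ≤ B) (x y : D) :
    gdist E (u x) (u y) ≤ gdist E x y + 2 * B ∧ gdist E x y ≤ gdist E (u x) (u y) + 2 * B := by
  have hux := hu x
  have huy := hu y
  have := gdist_comm hconn hE x (u x)
  have := gdist_comm hconn hE y (u y)
  have := gdist_triangle hconn (u x) x (u y)
  have := gdist_triangle hconn x y (u y)
  have := gdist_triangle hconn x (u x) y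
  have := gdist_triangle hconn (u x) (u y) y
  omega

end WalkDistance

section LevelRetraction

variable {X : Type*} {σ : Equiv.Perm X} {f : X → ℤ}

lemma apply_zpow_apply_eq_sub (hσ : ∀ x, f (σ x) = f x - 1) (n : ℤ) (x : X) :
    f ((σ ^ n) x) = f x - n := by
  induction n using Int.induction_on generalizing x with
  | zero => simp
  | succ n ih => rw [zpow_add_one, Equiv.Perm.mul_apply, ih, hσ]; ring
  | pred n ih =>
    rw [zpow_sub_one, Equiv.Perm.mul_apply, ih]
    have hinv : σ (σ⁻¹ x) = x := σ.apply_symm_apply x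
    have := hσ (σ⁻¹ x)
    rw [hinv] at this
    linarith

variable (σ f) in
/-- When `σ` lowers `f` by one, this moves `x` down to the nearest level of `f` in `kℤ`. -/
def levelRetraction (k : ℕ) (x : X) : X :=
  (σ ^ (f x % k)) x

variable {k : ℕ}

lemma dvd_apply_levelRetraction (hσ : ∀ x, f (σ x) = f x - 1) (x : X) :
    (k : ℤ) ∣ f (levelRetraction σ f k x) := by
  rw [levelRetraction, apply_zpow_apply_eq_sub hσ]
  exact Int.dvd_self_sub_emod

lemma levelRetraction_of_dvd {x : X} (hx : (k : ℤ) ∣ f x) : levelRetraction σ f k x = x := by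
  simp [levelRetraction, Int.emod_eq_zero_of_dvd hx]

lemma range_levelRetraction (hσ : ∀ x, f (σ x) = f x - 1) :
    Set.range (levelRetraction σ f k) = {x | (k : ℤ) ∣ f x} :=
  Set.ext fun x => ⟨by rintro ⟨y, rfl⟩; exact dvd_apply_levelRetraction hσ y,
    fun hx => ⟨x, levelRetraction_of_dvd hx⟩⟩

lemma card_levelRetraction_fiber (hσ : ∀ x, f (σ x) = f x - 1) (hk : k ≠ 0) {y : X}
    (hy : (k : ℤ) ∣ f y) : Nat.card (levelRetraction σ f k ⁻¹' {y}) = k := by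
  have hmod (r : Fin k) : f ((σ ^ (-(r : ℤ))) y) % k = r := by
    obtain ⟨c, hc⟩ := hy
    rw [apply_zpow_apply_eq_sub hσ, hc, sub_neg_eq_add, add_comm, Int.add_mul_emod_self_left]
    exact Int.emod_eq_of_lt (by positivity) (by exact_mod_cast r.2)
  let lift (r : Fin k) : levelRetraction σ f k ⁻¹' {y} :=
    ⟨(σ ^ (-(r : ℤ))) y, by
      rw [Set.mem_preimage, Set.mem_singleton_iff, levelRetraction, hmod r]
      simp⟩
  rw [← Nat.card_eq_of_bijective lift, Nat.card_eq_fintype_card, Fintype.card_fin]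
  refine ⟨fun r s hrs => Fin.ext ?_, fun ⟨x, hx⟩ => ?_⟩
  · have := congrArg (fun z : levelRetraction σ f k ⁻¹' {y} => f z.1 % k) hrs
    simpa only [lift, hmod, Nat.cast_inj] using this
  · have hr : 0 ≤ f x % k := Int.emod_nonneg _ (by exact_mod_cast hk)
    have hrk : f x % k < k := Int.emod_lt_of_pos _ (by omega)
    refine ⟨⟨(f x % k).toNat, by omega⟩, Subtype.ext ?_⟩
    rw [Set.mem_preimage, Set.mem_singleton_iff, levelRetraction] at hx
    show (σ ^ (-(((f x % k).toNat : ℕ) : ℤ))) y = x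
    simp [Int.toNat_of_nonneg hr, ← hx]

lemma gdist_levelRetraction_le {E : X → X → Prop} (hE : ∀ x, E x (σ x)) (hk : k ≠ 0) (x : X) :
    gdist E x (levelRetraction σ f k x) ≤ k := by
  have hr : 0 ≤ f x % k := Int.emod_nonneg _ (by exact_mod_cast hk)
  have hrk : f x % k < k := Int.emod_lt_of_pos _ (by omega)
  have hwalk := HasWalkOfLength.iterate hE (f x % k).toNat x
  rw [← Equiv.Perm.coe_pow, ← zpow_natCast, Int.toNat_of_nonneg hr] at hwalk
  exact (gdist_le hwalk).trans (by omega)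

end LevelRetraction

section RegularTree

variable {T : Type*}

abbrev children (adj : T → T → Prop) (ht : T → ℤ) (v : T) : Type _ :=
  {w // adj v w ∧ ht w = ht v - 1}

/-- The local picture of the `(q+1)`-regular tree with a Busemann height `ht`: every vertex has
exactly one neighbour one level up and `q` neighbours one level down. -/
structure IsRegularHeight (adj : T → T → Prop) (ht : T → ℤ) (q : ℕ) : Prop where
  adj_comm : ∀ a b, adj a b ↔ adj b a
  card_children : ∀ v, Nat.card (children adj ht v) = q
  card_parents : ∀ v, Nat.card {w // adj v w ∧ ht w = ht v + 1} = 1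

namespace IsRegularHeight

variable {adj : T → T → Prop} {ht : T → ℤ} {q : ℕ} (H : IsRegularHeight adj ht q)

noncomputable def parent (v : T) : T :=
  (Nat.card_eq_one_iff_unique.1 (H.card_parents v)).2.some.1

lemma parent_spec (v : T) : adj v (H.parent v) ∧ ht (H.parent v) = ht v + 1 :=
  (Nat.card_eq_one_iff_unique.1 (H.card_parents v)).2.some.2

lemma parent_eq {v w : T} (hadj : adj v w) (hw : ht w = ht v + 1) : H.parent v = w :=
  congrArg Subtype.val <| (Nat.card_eq_one_iff_unique.1 (H.card_parents v)).1.elim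
    ⟨_, H.parent_spec v⟩ ⟨w, hadj, hw⟩

noncomputable def equivSigmaChildren : T ≃ Σ c, children adj ht c where
  toFun v := ⟨H.parent v, v, (H.adj_comm _ _).1 (H.parent_spec v).1, by
    linarith [(H.parent_spec v).2]⟩
  invFun p := p.2.1
  left_inv _ := rfl
  right_inv := fun ⟨c, w, hcw, hw⟩ =>
    Sigma.subtype_ext (H.parent_eq ((H.adj_comm _ _).1 hcw) (by linarith)) rfl

end IsRegularHeight

end RegularTree

def Equiv.prodSigmaSwap {A C : Type*} {β : C → Type*} {γ : A → Type*}
    (e : ∀ a c, β c ≃ γ a) : A × (Σ c, β c) ≃ (Σ a, γ a) × C where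
  toFun p := (⟨p.1, e p.1 p.2.1 p.2.2⟩, p.2.1)
  invFun p := (p.1.1, ⟨p.2, (e p.1.1 p.2).symm p.1.2⟩)
  left_inv := fun ⟨a, c, w⟩ => by simp
  right_inv := fun ⟨⟨a, w⟩, c⟩ => by simp

section TwoTrees

variable {T₁ T₂ : Type*} {adj₁ : T₁ → T₁ → Prop} {adj₂ : T₂ → T₂ → Prop} {ht₁ : T₁ → ℤ}
  {ht₂ : T₂ → ℤ} {q : ℕ}

noncomputable def IsRegularHeight.childrenEquiv (H₁ : IsRegularHeight adj₁ ht₁ q)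
    (H₂ : IsRegularHeight adj₂ ht₂ q) (hq : q ≠ 0) (a : T₁) (c : T₂) :
    children adj₂ ht₂ c ≃ children adj₁ ht₁ a :=
  have : Finite (children adj₂ ht₂ c) := Nat.finite_of_card_ne_zero (by rwa [H₂.card_children])
  have : Finite (children adj₁ ht₁ a) := Nat.finite_of_card_ne_zero (by rwa [H₁.card_children])
  (Finite.card_eq.1 ((H₂.card_children c).trans (H₁.card_children a).symm)).some

/-- `(a, b) ↦ (a', parent b)`, where the child `a'` of `a` is matched with `b` among the children
of `parent b`. -/
noncomputable def IsRegularHeight.descendAscend (H₁ : IsRegularHeight adj₁ ht₁ q)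
    (H₂ : IsRegularHeight adj₂ ht₂ q) (hq : q ≠ 0) : T₁ × T₂ ≃ T₁ × T₂ :=
  (Equiv.prodCongr (Equiv.refl T₁) H₂.equivSigmaChildren).trans <|
    (Equiv.prodSigmaSwap (H₁.childrenEquiv H₂ hq)).trans <|
      Equiv.prodCongr H₁.equivSigmaChildren.symm (Equiv.refl T₂)

lemma IsRegularHeight.descendAscend_spec (H₁ : IsRegularHeight adj₁ ht₁ q)
    (H₂ : IsRegularHeight adj₂ ht₂ q) (hq : q ≠ 0) (p : T₁ × T₂) :
    (adj₁ p.1 (H₁.descendAscend H₂ hq p).1 ∧ ht₁ (H₁.descendAscend H₂ hq p).1 = ht₁ p.1 - 1) ∧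
      (H₁.descendAscend H₂ hq p).2 = H₂.parent p.2 :=
  ⟨(H₁.childrenEquiv H₂ hq p.1 _ _).2, rfl⟩

lemma IsRegularHeight.height_add_descendAscend (H₁ : IsRegularHeight adj₁ ht₁ q)
    (H₂ : IsRegularHeight adj₂ ht₂ q) (hq : q ≠ 0) (p : T₁ × T₂) :
    ht₁ (H₁.descendAscend H₂ hq p).1 + ht₂ (H₁.descendAscend H₂ hq p).2 = ht₁ p.1 + ht₂ p.2 := by
  obtain ⟨⟨-, h₁⟩, h₂⟩ := H₁.descendAscend_spec H₂ hq p
  rw [h₁, h₂, (H₂.parent_spec p.2).2]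
  ring

end TwoTrees

section PairUpdate

variable {d : ℕ} {V : Fin d → Type*} {i j : Fin d}

def updatePair (x : ∀ l, V l) (p : V i × V j) : ∀ l, V l :=
  update (update x j p.2) i p.1

lemma updatePair_apply_left (x : ∀ l, V l) (p : V i × V j) : updatePair x p i = p.1 := by
  simp [updatePair]

lemma updatePair_apply_right (hij : i ≠ j) (x : ∀ l, V l) (p : V i × V j) :
    updatePair x p j = p.2 := by
  simp [updatePair, update_of_ne hij.symm]

lemma updatePair_apply_of_ne (x : ∀ l, V l) (p : V i × V j) {l : Fin d} (hi : l ≠ i)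
    (hj : l ≠ j) : updatePair x p l = x l := by
  simp [updatePair, update_of_ne hi, update_of_ne hj]

lemma updatePair_updatePair (hij : i ≠ j) (x : ∀ l, V l) (p p' : V i × V j) :
    updatePair (updatePair x p) p' = updatePair x p' := by
  simp [updatePair, update_comm hij]

lemma updatePair_self (x : ∀ l, V l) : updatePair x (x i, x j) = x := by
  simp [updatePair]

lemma sum_apply_update (h : ∀ l, V l → ℤ) (x : ∀ l, V l) (i : Fin d) (a : V i) :
    ∑ l, h l (update x i a l) = ∑ l, h l (x l) + h i a - h i (x i) := by
  simp_rw [apply_update h]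
  rw [Finset.sum_update_of_mem (Finset.mem_univ i),
    Finset.sum_eq_add_sum_sdiff_singleton_of_mem (Finset.mem_univ i) (fun l => h l (x l))]
  ring

lemma sum_updatePair (hij : i ≠ j) (h : ∀ l, V l → ℤ) (x : ∀ l, V l) (p : V i × V j) :
    ∑ l, h l (updatePair x p l) =
      ∑ l, h l (x l) + (h i p.1 + h j p.2) - (h i (x i) + h j (x j)) := by
  rw [updatePair, sum_apply_update, sum_apply_update, update_of_ne hij]
  ring

variable {h : ∀ l, V l → ℤ}

def DLvert.pairPerm (hij : i ≠ j) (e : V i × V j ≃ V i × V j)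
    (he : ∀ p, h i (e p).1 + h j (e p).2 = h i p.1 + h j p.2) : Equiv.Perm (DLvert V h) where
  toFun x := ⟨updatePair x.1 (e (x.1 i, x.1 j)), by rw [sum_updatePair hij, he, x.2]; ring⟩
  invFun x := ⟨updatePair x.1 (e.symm (x.1 i, x.1 j)), by
    rw [sum_updatePair hij, ← he, Equiv.apply_symm_apply, x.2]; ring⟩
  left_inv x := Subtype.ext <| by
    simp [updatePair_apply_left, updatePair_apply_right hij, updatePair_updatePair hij,
      updatePair_self]
  right_inv x := Subtype.ext <| by
    simp [updatePair_apply_left, updatePair_apply_right hij, updatePair_updatePair hij,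
      updatePair_self]

lemma DLvert.pairPerm_apply (hij : i ≠ j) (e : V i × V j ≃ V i × V j)
    (he : ∀ p, h i (e p).1 + h j (e p).2 = h i p.1 + h j p.2) (x : DLvert V h) :
    (pairPerm hij e he x).1 = updatePair x.1 (e (x.1 i, x.1 j)) :=
  rfl

end PairUpdate

section DescendAscend

variable {d q : ℕ} {V : Fin d → Type*} {adj : ∀ l, V l → V l → Prop} {h : ∀ l, V l → ℤ}
  {i j : Fin d}

lemma DLedge.symm (hadj : ∀ l (a b : V l), adj l a b ↔ adj l b a) {x y : DLvert V h}
    (e : DLedge adj h x y) : DLedge adj h y x :=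
  let ⟨i, j, hij, hi, hj, hl⟩ := e
  ⟨i, j, hij, (hadj i _ _).1 hi, (hadj j _ _).1 hj, fun l hli hlj => (hl l hli hlj).symm⟩

/-- The step going down in tree `i` and up in tree `j`; it is invertible because all vertices
of both trees have the same number `q` of children. -/
noncomputable def DLvert.descendAscend (H : ∀ l, IsRegularHeight (adj l) (h l) q) (hq : q ≠ 0)
    (hij : i ≠ j) : Equiv.Perm (DLvert V h) :=
  DLvert.pairPerm hij ((H i).descendAscend (H j) hq) ((H i).height_add_descendAscend (H j) hq)

lemma DLvert.height_descendAscend (H : ∀ l, IsRegularHeight (adj l) (h l) q) (hq : q ≠ 0)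
    (hij : i ≠ j) (x : DLvert V h) :
    h i ((descendAscend H hq hij x).1 i) = h i (x.1 i) - 1 := by
  rw [descendAscend, pairPerm_apply, updatePair_apply_left]
  exact ((H i).descendAscend_spec (H j) hq _).1.2

lemma DLvert.edge_descendAscend (H : ∀ l, IsRegularHeight (adj l) (h l) q) (hq : q ≠ 0)
    (hij : i ≠ j) (x : DLvert V h) : DLedge adj h x (descendAscend H hq hij x) := by
  obtain ⟨⟨hi, -⟩, hj⟩ := (H i).descendAscend_spec (H j) hq (x.1 i, x.1 j)
  refine ⟨i, j, hij, ?_, ?_, fun l hli hlj => (updatePair_apply_of_ne _ _ hli hlj).symm⟩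
  · rwa [descendAscend, pairPerm_apply, updatePair_apply_left]
  · rw [descendAscend, pairPerm_apply, updatePair_apply_right hij, hj]
    exact ((H j).parent_spec _).1

end DescendAscend

section QuasiIsometry

variable {X Y : Type*}

def IsQuasiIsometricWith (dX : X → X → ℝ) (dY : Y → Y → ℝ) (K C : ℝ) (φ : X → Y) : Prop :=
  ∀ x y, (1 / K) * dX x y - C ≤ dY (φ x) (φ y) ∧ dY (φ x) (φ y) ≤ K * dX x y + C

lemma IsQuasiIsometricWith.comp_of_near {dX : X → X → ℝ} {dY : Y → Y → ℝ} {K C B : ℝ}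
    {φ : X → Y} (hφ : IsQuasiIsometricWith dX dY K C φ) {u : Y → Y}
    (hu : ∀ y z, dY (u y) (u z) ≤ dY y z + B ∧ dY y z ≤ dY (u y) (u z) + B) :
    IsQuasiIsometricWith dX dY K (C + B) (u ∘ φ) := fun x y => by
  obtain ⟨hφ₁, hφ₂⟩ := hφ x y
  obtain ⟨hu₁, hu₂⟩ := hu (φ x) (φ y)
  exact ⟨by dsimp only [comp_apply]; linarith, by dsimp only [comp_apply]; linarith⟩

end QuasiIsometry

/-- There is a `k`-to-1 map `u : DL_d(q) → i(DL_d^k(q))` at bounded distance from the identity,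
where `i(DL_d^k(q))` is the set of vertices whose first-tree height lies in `kℤ`.  Consequently,
any bijective `(K,C)`-quasi-isometry `φ : DL_d^k(q) → DL_d(q)` yields a quasi-isometry
`Φ = u ∘ φ : DL_d^k(q) → DL_d^k(q)` with `|Φ⁻¹(v)| = k` for every vertex `v`. -/
theorem DL_k_to_one_map (q d k : ℕ) (hq : 2 ≤ q) (hd : 2 ≤ d) (hk : 1 ≤ k)
    (V : Fin d → Type*) (adj : ∀ i, V i → V i → Prop) (h : ∀ i, V i → ℤ)
    (hadjsymm : ∀ i (a b : V i), adj i a b ↔ adj i b a)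
    (hdown : ∀ i (v : V i), Nat.card {w : V i // adj i v w ∧ h i w = h i v - 1} = q)
    (hup : ∀ i (v : V i), Nat.card {w : V i // adj i v w ∧ h i w = h i v + 1} = 1)
    (hconn : ∀ x y : DLvert V h, ∃ (n : ℕ) (f : ℕ → DLvert V h),
      f 0 = x ∧ f n = y ∧ ∀ m < n, DLedge adj h (f m) (f (m + 1))) :
    ∃ u : DLvert V h → DLvert V h,
    ∃ hu : ∀ x, (k : ℤ) ∣ h ⟨0, by omega⟩ ((u x).1 ⟨0, by omega⟩),
      (Set.range u = {y : DLvert V h | (k : ℤ) ∣ h ⟨0, by omega⟩ (y.1 ⟨0, by omega⟩)}) ∧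
      (∀ y : DLvert V h, (k : ℤ) ∣ h ⟨0, by omega⟩ (y.1 ⟨0, by omega⟩) →
        Nat.card ↥(u ⁻¹' {y}) = k) ∧
      (∃ C : ℕ, ∀ x, DLdist adj h x (u x) ≤ C) ∧
      (∀ (φ : {x : DLvert V h // (k : ℤ) ∣ h ⟨0, by omega⟩ (x.1 ⟨0, by omega⟩)} → DLvert V h)
          (K C : ℝ), 1 ≤ K → 0 ≤ C → Function.Bijective φ →
        (∀ x y, (1 / K) * (DLdist adj h x.1 y.1 : ℝ) - C ≤ (DLdist adj h (φ x) (φ y) : ℝ) ∧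
          (DLdist adj h (φ x) (φ y) : ℝ) ≤ K * (DLdist adj h x.1 y.1 : ℝ) + C) →
        ∃ K' C' : ℝ, 1 ≤ K' ∧ 0 ≤ C' ∧
          (∀ x y, (1 / K') * (DLdist adj h x.1 y.1 : ℝ) - C' ≤
              (DLdist adj h (u (φ x)) (u (φ y)) : ℝ) ∧
            (DLdist adj h (u (φ x)) (u (φ y)) : ℝ) ≤ K' * (DLdist adj h x.1 y.1 : ℝ) + C') ∧
          (∀ z : {x : DLvert V h // (k : ℤ) ∣ h ⟨0, by omega⟩ (x.1 ⟨0, by omega⟩)},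
            ∃ x, (DLdist adj h (u (φ x)) z.1 : ℝ) ≤ C') ∧
          (∀ z : {x : DLvert V h // (k : ℤ) ∣ h ⟨0, by omega⟩ (x.1 ⟨0, by omega⟩)},
            Nat.card ↥{x | u (φ x) = z.1} = k)) := by
  have hk₀ : k ≠ 0 := by omega
  let f (x : DLvert V h) : ℤ := h ⟨0, by omega⟩ (x.1 ⟨0, by omega⟩)
  let σ := DLvert.descendAscend (fun l => ⟨hadjsymm l, hdown l, hup l⟩) (by omega : q ≠ 0)
    (show (⟨0, by omega⟩ : Fin d) ≠ ⟨1, by omega⟩ by simp)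
  have hσ (x : DLvert V h) : f (σ x) = f x - 1 := DLvert.height_descendAscend _ _ _ x
  let u := levelRetraction σ f k
  have hnear (x : DLvert V h) : DLdist adj h x (u x) ≤ k :=
    gdist_levelRetraction_le (DLvert.edge_descendAscend _ _ _) hk₀ x
  refine ⟨u, dvd_apply_levelRetraction hσ, range_levelRetraction hσ,
    fun y hy => card_levelRetraction_fiber hσ hk₀ hy, ⟨k, hnear⟩, ?_⟩
  intro φ K C hK hC hφ hqi
  refine ⟨K, C + 2 * k, hK, by positivity, ?_, fun z => ?_, fun z => ?_⟩
  · refine IsQuasiIsometricWith.comp_of_near (X := {x // (k : ℤ) ∣ f x})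
      (dX := fun x y => (DLdist adj h x.1 y.1 : ℝ)) (dY := fun a b => (DLdist adj h a b : ℝ))
      (u := u) (B := 2 * k) hqi fun y z => ?_
    obtain ⟨h₁, h₂⟩ := gdist_le_gdist_add_of_near hconn (fun _ _ => DLedge.symm hadjsymm) hnear y z
    exact ⟨by exact_mod_cast h₁, by exact_mod_cast h₂⟩
  · obtain ⟨x, hx⟩ := hφ.2 z.1
    have hz : u z.1 = z.1 := levelRetraction_of_dvd z.2
    refine ⟨x, ?_⟩
    rw [hx, hz, DLdist, gdist_self, Nat.cast_zero]
    positivity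
  · exact (Nat.card_preimage_of_injective hφ.1 (by simp [hφ.2.range_eq])).trans
      (card_levelRetraction_fiber hσ hk₀ z.2)
end

section
/- Let X be a uniformly discrete metric space of bounded geometry admitting a Følner sequence {F_i} of boxes. Suppose Ψ : X → X is a map, k ∈ ℕ, and λ > 0 with λ ≠ 1/k, and suppose there exist constants r and K such that for each member S of the Følner sequence, (1/λ)(|S| − |∂_r S|) ≤ Σ_{x∈S} |Ψ^{−1}(x)| ≤ (1/λ)|S| + K|∂_r S|. Then the 0-chain c = Σ_x (|Ψ^{−1}(x)| − k)·x does not vanish in uniformly finite homology H₀^{uf}(X); i.e., there is no r' > 0 with |Σ_{x∈F_i}(|Ψ^{−1}(x)| − k)| = O(|∂_{r'} F_i|). -/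
/-- The `r`-boundary of a set `S` in a metric space. -/
def rBdry {X : Type*} [MetricSpace X] (r : ℝ) (S : Set X) : Set X :=
  {s ∈ S | ∃ x, x ∉ S ∧ dist s x ≤ r}

/-- Nonvanishing criterion in uniformly finite homology `H₀^{uf}(X)`: if `Ψ : X → X` and the
fiber-counting sums over a Følner sequence of boxes `F i` satisfy
`(1/λ)(|F i| − |∂_r F i|) ≤ Σ_{x ∈ F i} |Ψ⁻¹(x)| ≤ (1/λ)|F i| + K|∂_r F i|` with `λ ≠ 1/k`,
then the 0-chain `Σ_x (|Ψ⁻¹(x)| − k)·x` does not vanish: there is no `r' > 0` with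
`|Σ_{x ∈ F i}(|Ψ⁻¹(x)| − k)| = O(|∂_{r'} F i|)`. -/
theorem uf_chain_nonvanishing {X : Type*} [MetricSpace X]
    (Ψ : X → X) (hfib : ∀ x : X, (Ψ ⁻¹' {x}).Finite)
    (k : ℕ) (hk : 1 ≤ k) (lam : ℝ) (hlam : 0 < lam) (hlamk : lam ≠ 1 / k)
    (F : ℕ → Set X) (hFfin : ∀ i, (F i).Finite) (hFne : ∀ i, (F i).Nonempty)
    (hFol : ∀ r : ℝ, 0 < r →
      Filter.Tendsto (fun i => (Nat.card ↥(rBdry r (F i)) : ℝ) / (Nat.card ↥(F i) : ℝ))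
        Filter.atTop (nhds 0))
    (r K : ℝ) (hr : 0 < r) (hK : 0 < K)
    (hbounds : ∀ i,
      (1 / lam) * ((Nat.card ↥(F i) : ℝ) - (Nat.card ↥(rBdry r (F i)) : ℝ)) ≤
          ∑ x ∈ (hFfin i).toFinset, (Nat.card ↥(Ψ ⁻¹' {x}) : ℝ) ∧
      ∑ x ∈ (hFfin i).toFinset, (Nat.card ↥(Ψ ⁻¹' {x}) : ℝ) ≤
          (1 / lam) * (Nat.card ↥(F i) : ℝ) + K * (Nat.card ↥(rBdry r (F i)) : ℝ)) :
    ¬ ∃ r' : ℝ, 0 < r' ∧ ∃ M : ℝ, ∀ i,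
      |∑ x ∈ (hFfin i).toFinset, ((Nat.card ↥(Ψ ⁻¹' {x}) : ℝ) - (k : ℝ))| ≤
        M * (Nat.card ↥(rBdry r' (F i)) : ℝ) := by
  rintro ⟨r', hr', M, hM⟩
  set δ : ℝ := |1 / lam - k| with hδdef
  have hδ : 0 < δ := by
    rw [hδdef, abs_pos, sub_ne_zero]
    intro h
    exact hlamk (by rw [← h, one_div_one_div])
  set C : ℝ := max K (1 / lam) with hC
  set n : ℕ → ℝ := fun i => (Nat.card ↥(F i) : ℝ) with hn
  set b : ℕ → ℝ := fun i => (Nat.card ↥(rBdry r (F i)) : ℝ) with hb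
  set b' : ℕ → ℝ := fun i => (Nat.card ↥(rBdry r' (F i)) : ℝ) with hb'
  have hnpos : ∀ i, 0 < n i := by
    intro i
    have h : Nat.card ↥(F i) ≠ 0 := Nat.card_ne_zero.2 ⟨(hFne i).to_subtype, (hFfin i).to_subtype⟩
    show (0:ℝ) < (Nat.card ↥(F i) : ℝ)
    exact_mod_cast Nat.pos_of_ne_zero h
  have key : ∀ i, δ ≤ M * (b' i / n i) + C * (b i / n i) := by
    intro i
    have hcard : ((hFfin i).toFinset.card : ℝ) = n i := by
      show ((hFfin i).toFinset.card : ℝ) = (Nat.card ↥(F i) : ℝ)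
      norm_cast
      rw [Nat.card_coe_set_eq, Set.ncard_eq_toFinset_card _ (hFfin i)]
    have hsum : ∑ x ∈ (hFfin i).toFinset, ((Nat.card ↥(Ψ ⁻¹' {x}) : ℝ) - (k : ℝ))
        = (∑ x ∈ (hFfin i).toFinset, (Nat.card ↥(Ψ ⁻¹' {x}) : ℝ)) - k * n i := by
      rw [Finset.sum_sub_distrib, Finset.sum_const, nsmul_eq_mul, hcard]; ring
    set S := ∑ x ∈ (hFfin i).toFinset, (Nat.card ↥(Ψ ⁻¹' {x}) : ℝ) with hS
    obtain ⟨h1, h2⟩ := hbounds i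
    have hmid : |S - (1 / lam) * n i| ≤ C * b i := by
      rw [abs_le]
      constructor
      · have h0 : 0 ≤ (1 / lam) := by positivity
        have hb0 : (0:ℝ) ≤ b i := by positivity
        nlinarith [le_max_right K (1 / lam)]
      · have hb0 : (0:ℝ) ≤ b i := by positivity
        nlinarith [le_max_left K (1 / lam)]
    have hδn : δ * n i ≤ M * b' i + C * b i := by
      have h3 := hM i
      rw [hsum] at h3
      have : δ * n i = |(1 / lam - k) * n i| := by
        rw [abs_mul, abs_of_pos (hnpos i)]
      rw [this]
      have : (1 / lam - k) * n i = (S - k * n i) - (S - (1 / lam) * n i) := by ring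
      rw [this]
      calc |(S - k * n i) - (S - (1 / lam) * n i)|
          ≤ |S - k * n i| + |S - (1 / lam) * n i| := abs_sub _ _
        _ ≤ M * b' i + C * b i := add_le_add h3 hmid
    have := hnpos i
    rw [mul_div_assoc', mul_div_assoc', ← add_div, le_div_iff₀ this]
    linarith
  have htend : Filter.Tendsto (fun i => M * (b' i / n i) + C * (b i / n i))
      Filter.atTop (nhds 0) := by
    have h1 := (hFol r' hr').const_mul M
    have h2 := (hFol r hr).const_mul C
    have h3 := h1.add h2
    rw [mul_zero, mul_zero, add_zero] at h3
    exact h3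
  have := htend.eventually (eventually_lt_nhds hδ)
  obtain ⟨i, hi⟩ := this.exists
  exact absurd (key i) (not_le.2 hi)
end
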